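/- Let f(Q) = (1/2)(log det(I + H₁·Q·H₁ᵀ) − log det(I + H₂·Q·H₂ᵀ)). If H₂ᵀ·H₂ ⪰ H₁ᵀ·H₁ (i.e., H₂ᵀH₂ − H₁ᵀH₁ is positive semidefinite), then f(Q) ≤ 0 for every positive semidefinite Q. -/

import Mathlib

open Matrix

/-!
Write `Q = Bᴴ B`. By the Weinstein–Aronszajn identity, `det (1 + H Q Hᵀ) = det (1 + B (Hᵀ H) Bᴴ)`,
so the degradedness condition becomes the Loewner inequality
`1 + B (H₁ᵀ H₁) Bᴴ ≤ 1 + B (H₂ᵀ H₂) Bᴴ` between positive definite matrices,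
and the determinant is monotone for the Loewner order.
-/

namespace Matrix

lemma det_one_add_mul_conjTranspose_mul_self_mul_conjTranspose {m n k R : Type*}
    [Fintype m] [DecidableEq m] [Fintype n] [Fintype k] [DecidableEq k] [CommRing R] [StarRing R]
    (X : Matrix m n R) (Y : Matrix k n R) :
    det (1 + X * (Yᴴ * Y) * Xᴴ) = det (1 + Y * (Xᴴ * X) * Yᴴ) := by
  simpa only [Matrix.mul_assoc] using det_one_add_mul_comm (X * Yᴴ) (Y * Xᴴ)

section Real

variable {n : Type*} [Fintype n] [DecidableEq n]

lemma IsHermitian.det_one_add {M : Matrix n n ℝ} (hM : M.IsHermitian) :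
    det (1 + M) = ∏ i, (1 + hM.eigenvalues i) := by
  conv_lhs =>
    rw [hM.spectral_theorem, ← map_one (Unitary.conjStarAlgAut ℝ _ hM.eigenvectorUnitary),
      ← map_add]
  rw [Unitary.conjStarAlgAut_apply, det_mul_comm, ← mul_assoc]
  simp [← diagonal_one, diagonal_add, det_diagonal]

lemma PosSemidef.one_le_det_one_add {M : Matrix n n ℝ} (hM : M.PosSemidef) :
    1 ≤ det (1 + M) := by
  rw [hM.isHermitian.det_one_add]
  exact Finset.one_le_prod fun i _ ↦ le_add_of_nonneg_right (hM.eigenvalues_nonneg i)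

lemma PosDef.det_le_det_add {A P : Matrix n n ℝ} (hA : A.PosDef) (hP : P.PosSemidef) :
    det A ≤ det (A + P) := by
  open scoped MatrixOrder in
  obtain ⟨C, rfl⟩ := CStarAlgebra.nonneg_iff_eq_star_mul_self.mp hP.nonneg
  -- `det (A + Cᴴ C) = det A * det (1 + C A⁻¹ Cᴴ)` by Weinstein–Aronszajn.
  have hfactor : A + star C * C = A * (1 + A⁻¹ * star C * C) := by
    rw [mul_add, mul_one, ← mul_assoc, ← mul_assoc, mul_nonsing_inv _ hA.det_pos.ne'.isUnit,
      one_mul]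
  have hN : (C * A⁻¹ * Cᴴ).PosSemidef := hA.inv.posSemidef.mul_mul_conjTranspose_same C
  rw [hfactor, det_mul, det_one_add_mul_comm (A⁻¹ * star C) C, ← mul_assoc,
    star_eq_conjTranspose]
  exact le_mul_of_one_le_right hA.det_pos.le hN.one_le_det_one_add

lemma PosSemidef.det_le_det {A B : Matrix n n ℝ} (hA : A.PosSemidef)
    (hAB : (B - A).PosSemidef) : det A ≤ det B := by
  by_cases hdet : det A = 0
  · simpa [hdet] using (hA.add hAB).det_nonneg
  · simpa using (hA.posDef_iff_det_ne_zero.mpr hdet).det_le_det_add hAB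

end Real

end Matrix

theorem degraded_secrecy_rate_nonpos (n1 n2 nt : ℕ)
    (H1 : Matrix (Fin n1) (Fin nt) ℝ) (H2 : Matrix (Fin n2) (Fin nt) ℝ)
    (hdeg : (H2ᵀ * H2 - H1ᵀ * H1).PosSemidef) :
    ∀ Q : Matrix (Fin nt) (Fin nt) ℝ, Q.PosSemidef →
      (1 / 2) * (Real.log (1 + H1 * Q * H1ᵀ).det
        - Real.log (1 + H2 * Q * H2ᵀ).det) ≤ 0 := by
  intro Q hQ
  open scoped MatrixOrder in
  obtain ⟨B, rfl⟩ := CStarAlgebra.nonneg_iff_eq_star_mul_self.mp hQ.nonneg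
  simp only [← conjTranspose_eq_transpose_of_trivial, star_eq_conjTranspose] at hdeg ⊢
  rw [det_one_add_mul_conjTranspose_mul_self_mul_conjTranspose H1 B,
    det_one_add_mul_conjTranspose_mul_self_mul_conjTranspose H2 B]
  have hM1 : (B * (H1ᴴ * H1) * Bᴴ).PosSemidef :=
    (posSemidef_conjTranspose_mul_self H1).mul_mul_conjTranspose_same B
  have hM12 : (B * (H2ᴴ * H2) * Bᴴ - B * (H1ᴴ * H1) * Bᴴ).PosSemidef := by
    simpa only [mul_sub, sub_mul] using hdeg.mul_mul_conjTranspose_same B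
  have hdet_le : det (1 + B * (H1ᴴ * H1) * Bᴴ) ≤ det (1 + B * (H2ᴴ * H2) * Bᴴ) :=
    (PosSemidef.one.add hM1).det_le_det (by simpa only [add_sub_add_left_eq_sub] using hM12)
  have hlog_le := Real.log_le_log (zero_lt_one.trans_le hM1.one_le_det_one_add) hdet_le
  linarith
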